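/- arXiv:1912.02381 — 5 statements merged into one kernel-verified Lean document; each statement's English description precedes it below -/
import Mathlib

section
/- Let C be a unital C*-algebra and H a Hilbert space. If y ∈ C, h ∈ H, and z ∈ C ⊗_min B(H) satisfy 0 ≤ z ≤ y ⊗ |h⟩⟨h|, then z = v ⊗ |h⟩⟨h| for some positive element v ∈ C. -/
/-- An abstract realization of the minimal C*-tensor product `A ⊗_min B`:
a C*-algebra `T` together with a bilinear map `tmul : A → B → T` which is
multiplicative, star-preserving, unital, injective in each slice, and whose
range spans a dense subspace of `T`. -/
structure CStarTensorProduct (A B T : Type*) [CStarAlgebra A] [CStarAlgebra B]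
    [CStarAlgebra T] where
  tmul : A →ₗ[ℂ] B →ₗ[ℂ] T
  tmul_mul : ∀ (a a' : A) (b b' : B), tmul (a * a') (b * b') = tmul a b * tmul a' b'
  tmul_star : ∀ (a : A) (b : B), star (tmul a b) = tmul (star a) (star b)
  tmul_one : tmul 1 1 = 1
  left_injective : ∀ (a : A) (b : B), b ≠ 0 → tmul a b = 0 → a = 0
  right_injective : ∀ (a : A) (b : B), a ≠ 0 → tmul a b = 0 → b = 0
  dense_span : Dense (Submodule.span ℂ {t : T | ∃ a b, t = tmul a b} : Set T)

/-!
With `u = h / ‖h‖` and `e = |u⟩⟨u|` we have `y ⊗ |h⟩⟨h| = (‖h‖² y) ⊗ e`, and `e` is a minimal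
projection: `e b e ∈ ℂ e` for every `b`. Then `P = 1 ⊗ e` is a projection with
`P (y ⊗ e) P = y ⊗ e`, so `0 ≤ z ≤ y ⊗ e` gives `(1 - P) z (1 - P) = 0`, hence `z = P z P`.
Compression by `P` maps each `a ⊗ b` into the range of the injective *-homomorphism
`a ↦ a ⊗ e`, which is closed; by density `z = v ⊗ e`, and `v ≥ 0` since injective
*-homomorphisms reflect positivity.
-/

section CStarAlgebra

variable {A B : Type*} [NonUnitalCStarAlgebra A] [PartialOrder A] [StarOrderedRing A]

lemma NonUnitalStarAlgHom.nonneg_of_map_nonneg [NonUnitalCStarAlgebra B] [PartialOrder B]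
    [StarOrderedRing B] (φ : A →⋆ₙₐ[ℂ] B) (hφ : Function.Injective φ) {a : A} (ha : 0 ≤ φ a) :
    0 ≤ a := by
  have hsa : IsSelfAdjoint a := hφ <| by rw [map_star, ha.isSelfAdjoint.star_eq]
  rw [← CFC.negPart_eq_zero_iff a, ← map_eq_zero_iff φ hφ, CFC.negPart_def,
    φ.map_cfcₙ (·⁻ : ℝ → ℝ) a, ← CFC.negPart_def, CFC.negPart_eq_zero_iff _ ha.isSelfAdjoint]
  exact ha

lemma mul_eq_zero_of_star_mul_mul_eq_zero {z : A} (hz : 0 ≤ z) {x : A}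
    (h : star x * z * x = 0) : z * x = 0 := by
  have hz' := CFC.sqrt_mul_sqrt_self z hz
  have hsx : CFC.sqrt z * x = 0 := by
    rw [← CStarRing.star_mul_self_eq_zero_iff, star_mul, (CFC.sqrt_nonneg z).isSelfAdjoint.star_eq]
    calc star x * CFC.sqrt z * (CFC.sqrt z * x) = star x * (CFC.sqrt z * CFC.sqrt z) * x := by
          simp only [mul_assoc]
      _ = 0 := by rw [hz', h]
  rw [← hz', mul_assoc, hsx, mul_zero]

end CStarAlgebra

lemma IsStarProjection.mul_mul_eq_self_of_le {T : Type*} [CStarAlgebra T] [PartialOrder T]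
    [StarOrderedRing T] {p y z : T} (hp : IsStarProjection p) (hy : p * y * p = y)
    (hz : 0 ≤ z) (hzy : z ≤ y) : p * z * p = z := by
  have hqyq : (1 - p) * y * (1 - p) = 0 :=
    calc (1 - p) * y * (1 - p) = ((1 - p) * p) * y * (p * (1 - p)) := by
          conv_lhs => rw [← hy]
          simp only [mul_assoc]
      _ = 0 := by rw [hp.one_sub_mul_self, zero_mul, zero_mul]
  have hqzq : star (1 - p) * z * (1 - p) = 0 := by
    refine le_antisymm ?_ (star_left_conjugate_nonneg hz _)
    simpa [hp.one_sub.isSelfAdjoint.star_eq, hqyq] using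
      star_left_conjugate_le_conjugate hzy (1 - p)
  have hzp : z * p = z := by
    simpa [mul_sub, sub_eq_zero, eq_comm] using mul_eq_zero_of_star_mul_mul_eq_zero hz hqzq
  have hpz : p * z = z := by
    simpa [hp.isSelfAdjoint.star_eq, hz.isSelfAdjoint.star_eq] using congrArg star hzp
  rw [hpz, hzp]

open InnerProductSpace in
lemma InnerProductSpace.rankOne_self_eq_norm_sq_smul {𝕜 E : Type*} [RCLike 𝕜]
    [NormedAddCommGroup E] [InnerProductSpace 𝕜 E] (x : E) :
    rankOne 𝕜 x x = ((‖x‖ ^ 2 : ℝ) : 𝕜) • rankOne 𝕜 ((‖x‖ : 𝕜)⁻¹ • x) ((‖x‖ : 𝕜)⁻¹ • x) := by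
  rcases eq_or_ne x 0 with rfl | hx
  · simp
  have : (‖x‖ : 𝕜) ≠ 0 := by simpa using hx
  ext y
  simp only [rankOne_apply, map_pow, map_smul, smul_apply, ContinuousLinearMap.map_smulₛₗ, map_inv₀,
    RCLike.conj_ofReal, smul_smul]
  field_simp

open InnerProductSpace ContinuousLinearMap in
lemma InnerProductSpace.rankOne_mul_mul_rankOne {𝕜 E : Type*} [RCLike 𝕜] [NormedAddCommGroup E]
    [InnerProductSpace 𝕜 E] (x y z w : E) (b : E →L[𝕜] E) :
    rankOne 𝕜 x y * b * rankOne 𝕜 z w = inner 𝕜 y (b z) • rankOne 𝕜 x w := by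
  rw [mul_assoc, mul_def, mul_def, comp_rankOne, rankOne_comp_rankOne]

namespace CStarTensorProduct

variable {A B T : Type*} [CStarAlgebra A] [CStarAlgebra B] [CStarAlgebra T]
  (τ : CStarTensorProduct A B T) {e : B}

noncomputable def tmulRightHom (he : IsStarProjection e) : A →⋆ₙₐ[ℂ] T where
  toFun a := τ.tmul a e
  map_smul' c a := by simp
  map_zero' := by simp
  map_add' a a' := by simp
  map_mul' a a' := by rw [← τ.tmul_mul, he.isIdempotentElem.eq]
  map_star' a := by rw [τ.tmul_star, he.isSelfAdjoint.star_eq]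

@[simp]
lemma tmulRightHom_apply (he : IsStarProjection e) (a : A) : τ.tmulRightHom he a = τ.tmul a e :=
  rfl

lemma tmulRightHom_injective (he : IsStarProjection e) (he0 : e ≠ 0) :
    Function.Injective (τ.tmulRightHom he) :=
  (injective_iff_map_eq_zero _).mpr fun a ha ↦ τ.left_injective a e he0 ha

lemma one_tmul_mul_tmul_mul_one_tmul (a : A) (b b' : B) :
    τ.tmul 1 b * τ.tmul a b' * τ.tmul 1 b = τ.tmul a (b * b' * b) := by
  rw [← τ.tmul_mul, ← τ.tmul_mul, one_mul, mul_one]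

lemma one_tmul_mul_mul_one_tmul_mem_range (he : IsStarProjection e) (he0 : e ≠ 0)
    (hmin : ∀ b : B, ∃ c : ℂ, e * b * e = c • e) (t : T) :
    τ.tmul 1 e * t * τ.tmul 1 e ∈ Set.range (τ.tmulRightHom he) := by
  set P := τ.tmul 1 e
  set M : Submodule ℂ T := LinearMap.range (τ.tmulRightHom he : A →ₗ[ℂ] T)
  have hM : IsClosed (M : Set T) :=
    (NonUnitalStarAlgHom.isometry _
      (τ.tmulRightHom_injective he he0)).isClosedEmbedding.isClosed_range
  have hspan : Submodule.span ℂ {t : T | ∃ a b, t = τ.tmul a b} ≤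
      M.comap (LinearMap.mulLeft ℂ P ∘ₗ LinearMap.mulRight ℂ P) := by
    rw [Submodule.span_le]
    rintro _ ⟨a, b, rfl⟩
    obtain ⟨c, hc⟩ := hmin b
    refine ⟨c • a, ?_⟩
    simp [P, ← mul_assoc, one_tmul_mul_tmul_mul_one_tmul, hc]
  have := map_mem_closure (f := fun s ↦ P * s * P) (t := M) (by fun_prop) (τ.dense_span t)
    fun s hs ↦ by simpa [mul_assoc] using hspan hs
  simpa [hM.closure_eq, M] using this

lemma exists_nonneg_tmul_eq_of_le_tmul [PartialOrder A] [StarOrderedRing A] [PartialOrder T]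
    [StarOrderedRing T] (he : IsStarProjection e) (he0 : e ≠ 0)
    (hmin : ∀ b : B, ∃ c : ℂ, e * b * e = c • e) {y : A} {z : T} (hz : 0 ≤ z)
    (hle : z ≤ τ.tmul y e) : ∃ v : A, 0 ≤ v ∧ z = τ.tmul v e := by
  have hP : IsStarProjection (τ.tmul 1 e) := (IsStarProjection.one A).map (τ.tmulRightHom he)
  have hcorner : τ.tmul 1 e * z * τ.tmul 1 e = z := by
    refine hP.mul_mul_eq_self_of_le ?_ hz hle
    rw [one_tmul_mul_tmul_mul_one_tmul, he.isIdempotentElem.eq, he.isIdempotentElem.eq]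
  obtain ⟨v, hv⟩ := τ.one_tmul_mul_mul_one_tmul_mem_range he he0 hmin z
  rw [hcorner, tmulRightHom_apply] at hv
  refine ⟨v, (τ.tmulRightHom he).nonneg_of_map_nonneg (τ.tmulRightHom_injective he he0) ?_, hv.symm⟩
  rwa [tmulRightHom_apply, hv]

end CStarTensorProduct

/-- if `C` is a unital C*-algebra, `H` a Hilbert space, `y ∈ C`, `h ∈ H`
and `z ∈ C ⊗_min B(H)` satisfies `0 ≤ z ≤ y ⊗ |h⟩⟨h|`, then `z = v ⊗ |h⟩⟨h|` for some
positive `v ∈ C`. Here `|h⟩⟨h| = (innerSL ℂ h).smulRight h` is the map `x ↦ ⟪h, x⟫ • h`. -/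
theorem factor_of_le_tmul_rankOne {C H T : Type*} [CStarAlgebra C] [PartialOrder C]
    [StarOrderedRing C] [NormedAddCommGroup H] [InnerProductSpace ℂ H] [CompleteSpace H]
    [CStarAlgebra T] [PartialOrder T] [StarOrderedRing T]
    (τ : CStarTensorProduct C (H →L[ℂ] H) T)
    (y : C) (h : H) (z : T)
    (hz : 0 ≤ z) (hle : z ≤ τ.tmul y ((innerSL ℂ h).smulRight h)) :
    ∃ v : C, 0 ≤ v ∧ z = τ.tmul v ((innerSL ℂ h).smulRight h) := by
  rcases eq_or_ne h 0 with rfl | hh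
  · refine ⟨0, le_rfl, ?_⟩
    simp only [map_zero, ContinuousLinearMap.smulRight_zero] at hle ⊢
    exact le_antisymm hle hz
  have hu : ‖(‖h‖ : ℂ)⁻¹ • h‖ = 1 := norm_smul_inv_norm hh
  have hr : (innerSL ℂ h).smulRight h = ((‖h‖ ^ 2 : ℝ) : ℂ) •
      InnerProductSpace.rankOne ℂ ((‖h‖ : ℂ)⁻¹ • h) ((‖h‖ : ℂ)⁻¹ • h) :=
    InnerProductSpace.rankOne_self_eq_norm_sq_smul h
  generalize (‖h‖ : ℂ)⁻¹ • h = u at hu hr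
  have hu0 : u ≠ 0 := norm_ne_zero_iff.mp (hu ▸ one_ne_zero)
  have hc : (‖h‖ ^ 2 : ℝ) ≠ 0 := by positivity
  obtain ⟨v, hv, rfl⟩ := τ.exists_nonneg_tmul_eq_of_le_tmul
    (InnerProductSpace.isStarProjection_rankOne_self hu)
    (InnerProductSpace.rankOne_ne_zero hu0 hu0)
    (fun b ↦ ⟨_, InnerProductSpace.rankOne_mul_mul_rankOne u u u u b⟩)
    (y := ((‖h‖ ^ 2 : ℝ) : ℂ) • y) hz (by rwa [map_smul, LinearMap.smul_apply, ← map_smul, ← hr])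
  refine ⟨(‖h‖ ^ 2 : ℝ)⁻¹ • v, smul_nonneg (by positivity) hv, ?_⟩
  rw [hr, map_smul, Complex.coe_smul, LinearMap.map_smul_of_tower, LinearMap.smul_apply, smul_smul,
    mul_inv_cancel₀ hc, one_smul]
end

section
/- Let A, C be C*-algebras, H a Hilbert space, β : A ⊗_min B(H) → C ⊗_min B(H) positive linear with α ⊗ id - β positive for a linear map α : A → C. Then for all g, h ∈ H and positive a ∈ A, the elements γ_g(a), γ_h(a) ∈ C determined by β(a ⊗ |g⟩⟨g|) = γ_g(a) ⊗ |g⟩⟨g| and β(a ⊗ |h⟩⟨h|) = γ_h(a) ⊗ |h⟩⟨h| coincide when g ⊥ h; that is, γ_g(a) = γ_h(a). -/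
open scoped InnerProductSpace

/-!
Normalize `g, h` to unit vectors and put `p = ½|g + h⟩⟨g + h|`, `m = ½|g - h⟩⟨g - h|`: orthogonal
projections with `p + m = |g⟩⟨g| + |h⟩⟨h|`. Positivity of `β` and of `α ⊗ id - β` squeezes
`0 ≤ β(a ⊗ p) ≤ α(a) ⊗ p`, which forces `β(a ⊗ p)` into the corner cut out by `1 ⊗ p`, and
likewise for `m`. Compressing `β(a ⊗ p) + β(a ⊗ m) = γ_g ⊗ |g⟩⟨g| + γ_h ⊗ |h⟩⟨h|` by `1 ⊗ p`, with
`p |g⟩⟨g| p = p |h⟩⟨h| p = p / 2`, gives `β(a ⊗ p) = e ⊗ p` for `e = (γ_g + γ_h) / 2`, and likewise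
`β(a ⊗ m) = e ⊗ m`. Summing, `(γ_g - e) ⊗ (|g⟩⟨g| - |h⟩⟨h|) = 0`, so `γ_g = e = γ_h`.
-/

open InnerProductSpace (rankOne)

section CStarAlgebra

variable {T : Type*} [CStarAlgebra T] [PartialOrder T] [StarOrderedRing T]

lemma mul_eq_left_of_nonneg_of_le {q x y : T} (hx : 0 ≤ x) (hxy : x ≤ y) (hyq : y * q = y) :
    x * q = x := by
  have hy : y * (1 - q) = 0 := by rw [mul_sub, mul_one, hyq, sub_self]
  have hconj : star (1 - q) * x * (1 - q) = 0 := by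
    refine le_antisymm ?_ (star_left_conjugate_nonneg hx _)
    grw [star_left_conjugate_le_conjugate hxy (1 - q), mul_assoc, hy, mul_zero]
  have hsqrt : CFC.sqrt x * (1 - q) = 0 := by
    rw [← norm_eq_zero, ← sq_eq_zero_iff, ← CFC.norm_star_mul_mul_self_of_nonneg _ hx, hconj,
      norm_zero]
  have hxr : x * (1 - q) = 0 := by
    rw [← CFC.sqrt_mul_sqrt_self x hx, mul_assoc, hsqrt, mul_zero]
  rwa [mul_sub, mul_one, sub_eq_zero, eq_comm] at hxr

lemma IsSelfAdjoint.conjugate_eq_of_nonneg_of_le {q x y : T} (hq : IsSelfAdjoint q)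
    (hx : 0 ≤ x) (hxy : x ≤ y) (hyq : y * q = y) : q * x * q = x := by
  have hxq := mul_eq_left_of_nonneg_of_le hx hxy hyq
  have hqx : q * x = x := by simpa [hx.star_eq, hq.star_eq] using congr(star $hxq)
  rw [hqx, hxq]

end CStarAlgebra

section Polarization

variable {H : Type*} [NormedAddCommGroup H] [InnerProductSpace ℂ H]

lemma rankOne_real_smul_self (r : ℝ) (x : H) :
    rankOne ℂ ((r : ℂ) • x) ((r : ℂ) • x) = ((r ^ 2 : ℝ) : ℂ) • rankOne ℂ x x := by
  simp only [map_smul, map_smulₛₗ, Complex.conj_ofReal, smul_smul, smul_apply]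
  push_cast
  ring_nf

lemma rankOne_neg_self (x : H) : rankOne ℂ (-x) (-x) = rankOne ℂ x x := by
  simp only [map_neg, neg_apply, neg_neg]

lemma rankOne_self_mul_rankOne_self_mul_rankOne_self (u w : H) :
    rankOne ℂ u u * rankOne ℂ w w * rankOne ℂ u u = (⟪u, w⟫_ℂ * ⟪w, u⟫_ℂ) • rankOne ℂ u u := by
  simp only [ContinuousLinearMap.mul_def, InnerProductSpace.rankOne_comp_rankOne,
    ContinuousLinearMap.smul_comp, smul_smul]

lemma rankOne_self_ne_rankOne_self {g h : H} (hg : g ≠ 0) (hgh : ⟪g, h⟫_ℂ = 0) :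
    rankOne ℂ g g ≠ rankOne ℂ h h := by
  intro heq
  simpa [inner_eq_zero_symm.mp hgh, hg] using congr($heq g)

/-- For orthonormal `g, h` this is the projection onto `ℂ (g + h)`. -/
noncomputable def polarizationProj (g h : H) : H →L[ℂ] H :=
  (2 : ℂ)⁻¹ • rankOne ℂ (g + h) (g + h)

lemma polarizationProj_comm (g h : H) : polarizationProj g h = polarizationProj h g := by
  rw [polarizationProj, polarizationProj, add_comm]

lemma polarizationProj_add_polarizationProj_neg (g h : H) :
    polarizationProj g h + polarizationProj g (-h) = rankOne ℂ g g + rankOne ℂ h h := by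
  simp only [polarizationProj, map_add, map_neg, add_apply, neg_apply]
  module

variable {g h : H}

lemma inner_add_add_self_of_orthonormal (hg : ‖g‖ = 1) (hh : ‖h‖ = 1) (hgh : ⟪g, h⟫_ℂ = 0) :
    ⟪g + h, g + h⟫_ℂ = 2 := by
  rw [inner_add_add_self, inner_self_eq_norm_sq_to_K, inner_self_eq_norm_sq_to_K, hg, hh, hgh,
    inner_eq_zero_symm.mp hgh]
  norm_num

lemma polarizationProj_mul_polarizationProj_neg (hg : ‖g‖ = 1) (hh : ‖h‖ = 1)
    (hgh : ⟪g, h⟫_ℂ = 0) : polarizationProj g h * polarizationProj g (-h) = 0 := by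
  have hinner : ⟪g + h, g + -h⟫_ℂ = 0 := by
    rw [← sub_eq_add_neg, inner_add_left, inner_sub_right, inner_sub_right,
      inner_self_eq_norm_sq_to_K, inner_self_eq_norm_sq_to_K, hg, hh, hgh,
      inner_eq_zero_symm.mp hgh]
    norm_num
  simp only [polarizationProj, smul_mul_smul, ContinuousLinearMap.mul_def,
    InnerProductSpace.rankOne_comp_rankOne, hinner, zero_smul, smul_zero]

lemma polarizationProj_mul_rankOne_self_mul_polarizationProj (hg : ‖g‖ = 1)
    (hgh : ⟪g, h⟫_ℂ = 0) :
    polarizationProj g h * rankOne ℂ g g * polarizationProj g h =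
      (2 : ℂ)⁻¹ • polarizationProj g h := by
  have hinner : ⟪g + h, g⟫_ℂ = 1 := by
    rw [inner_add_left, inner_self_eq_norm_sq_to_K, hg, inner_eq_zero_symm.mp hgh]
    norm_num
  have hinner' : ⟪g, g + h⟫_ℂ = 1 := by rw [← inner_conj_symm, hinner, map_one]
  simp only [polarizationProj, smul_mul_assoc, mul_smul_comm,
    rankOne_self_mul_rankOne_self_mul_rankOne_self, hinner, hinner', mul_one, one_smul]

lemma isStarProjection_polarizationProj [CompleteSpace H] (hg : ‖g‖ = 1) (hh : ‖h‖ = 1)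
    (hgh : ⟪g, h⟫_ℂ = 0) : IsStarProjection (polarizationProj g h) where
  isSelfAdjoint :=
    IsSelfAdjoint.smul (by simp [IsSelfAdjoint]) <|
      ContinuousLinearMap.isSelfAdjoint_iff_isSymmetric.mpr
        (InnerProductSpace.isSymmetric_rankOne_self _)
  isIdempotentElem := by
    simp only [IsIdempotentElem, polarizationProj, smul_mul_smul, ContinuousLinearMap.mul_def,
      InnerProductSpace.rankOne_comp_rankOne, inner_add_add_self_of_orthonormal hg hh hgh,
      smul_smul]
    norm_num

end Polarization

namespace CStarTensorProduct

variable {A B T : Type*} [CStarAlgebra A] [CStarAlgebra B] [CStarAlgebra T]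
  (τ : CStarTensorProduct A B T)

lemma tmul_one_mul_tmul_mul_tmul_one (p : B) (c : A) (b : B) :
    τ.tmul 1 p * τ.tmul c b * τ.tmul 1 p = τ.tmul c (p * b * p) := by
  rw [← τ.tmul_mul, ← τ.tmul_mul, one_mul, mul_one]

lemma isSelfAdjoint_tmul_one {p : B} (hp : IsSelfAdjoint p) : IsSelfAdjoint (τ.tmul 1 p) := by
  rw [IsSelfAdjoint, τ.tmul_star, star_one, hp.star_eq]

lemma tmul_one_mul_tmul_one {p m : B} (hpm : p * m = 0) : τ.tmul 1 p * τ.tmul 1 m = 0 := by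
  rw [← τ.tmul_mul, hpm, one_mul, map_zero]

lemma eq_of_tmul_add_tmul_eq_tmul_midpoint {b b' : B} (hbb' : b ≠ b') {c d : A}
    (h : τ.tmul c b + τ.tmul d b' = τ.tmul ((2 : ℂ)⁻¹ • (c + d)) (b + b')) : c = d := by
  have hzero : τ.tmul ((2 : ℂ)⁻¹ • (c - d)) (b - b') = 0 := by
    simp only [map_add, map_sub, map_smul, LinearMap.add_apply, LinearMap.sub_apply,
      LinearMap.smul_apply] at h ⊢
    linear_combination (norm := module) h
  have := τ.left_injective _ _ (sub_ne_zero.mpr hbb') hzero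
  rwa [smul_eq_zero_iff_right (by norm_num), sub_eq_zero] at this

variable [PartialOrder T] [StarOrderedRing T]

lemma tmul_nonneg [PartialOrder A] [StarOrderedRing A] [PartialOrder B] [StarOrderedRing B]
    {a : A} {b : B} (ha : 0 ≤ a) (hb : 0 ≤ b) : 0 ≤ τ.tmul a b := by
  rw [StarOrderedRing.nonneg_iff] at ha hb
  induction ha using AddSubmonoid.closure_induction with
  | mem _ ha =>
    obtain ⟨s, rfl⟩ := ha
    induction hb using AddSubmonoid.closure_induction with
    | mem _ hb =>
      obtain ⟨t, rfl⟩ := hb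
      rw [τ.tmul_mul, ← τ.tmul_star]
      exact star_mul_self_nonneg _
    | zero => simp
    | add _ _ _ _ h₁ h₂ => rw [map_add]; exact add_nonneg h₁ h₂
  | zero => simp
  | add _ _ _ _ h₁ h₂ => rw [map_add, LinearMap.add_apply]; exact add_nonneg h₁ h₂

lemma conjugate_eq_of_nonneg_of_le_tmul {p : B} (hp : IsStarProjection p) {c : A} {x : T}
    (hx : 0 ≤ x) (hxc : x ≤ τ.tmul c p) : τ.tmul 1 p * x * τ.tmul 1 p = x :=
  (τ.isSelfAdjoint_tmul_one hp.isSelfAdjoint).conjugate_eq_of_nonneg_of_le hx hxc <| by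
    rw [← τ.tmul_mul, mul_one, hp.isIdempotentElem.eq]

lemma conjugate_add_eq_of_nonneg_of_le_tmul {p m : B} (hp : IsStarProjection p)
    (hm : IsStarProjection m) (hpm : p * m = 0) {c c' : A} {x x' : T}
    (hx : 0 ≤ x) (hxc : x ≤ τ.tmul c p) (hx' : 0 ≤ x') (hxc' : x' ≤ τ.tmul c' m) :
    τ.tmul 1 p * (x + x') * τ.tmul 1 p = x := by
  rw [mul_add, add_mul, τ.conjugate_eq_of_nonneg_of_le_tmul hp hx hxc,
    ← τ.conjugate_eq_of_nonneg_of_le_tmul hm hx' hxc']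
  simp only [← mul_assoc, τ.tmul_one_mul_tmul_one hpm, zero_mul, add_zero]

end CStarTensorProduct

namespace CStarTensorProduct

variable {C H T : Type*} [CStarAlgebra C] [NormedAddCommGroup H] [InnerProductSpace ℂ H]
  [CompleteSpace H] [CStarAlgebra T] (τ : CStarTensorProduct C (H →L[ℂ] H) T) {g h : H}

lemma tmul_one_polarizationProj_conjugate (hg : ‖g‖ = 1) (hh : ‖h‖ = 1) (hgh : ⟪g, h⟫_ℂ = 0)
    (cg ch : C) :
    τ.tmul 1 (polarizationProj g h) * (τ.tmul cg (rankOne ℂ g g) + τ.tmul ch (rankOne ℂ h h)) *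
        τ.tmul 1 (polarizationProj g h) =
      τ.tmul ((2 : ℂ)⁻¹ • (cg + ch)) (polarizationProj g h) := by
  have hhg : ⟪h, g⟫_ℂ = 0 := inner_eq_zero_symm.mp hgh
  rw [mul_add, add_mul, tmul_one_mul_tmul_mul_tmul_one, tmul_one_mul_tmul_mul_tmul_one,
    polarizationProj_mul_rankOne_self_mul_polarizationProj hg hgh, polarizationProj_comm,
    polarizationProj_mul_rankOne_self_mul_polarizationProj hh hhg, polarizationProj_comm h g]
  simp only [map_smul, map_add, LinearMap.smul_apply, LinearMap.add_apply, smul_add]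

lemma apply_rankOne_real_smul_eq_tmul (f : (H →L[ℂ] H) →ₗ[ℂ] T) {k : H} {ck : C} (r : ℝ)
    (hfk : f (rankOne ℂ k k) = τ.tmul ck (rankOne ℂ k k)) :
    f (rankOne ℂ ((r : ℂ) • k) ((r : ℂ) • k)) =
      τ.tmul ck (rankOne ℂ ((r : ℂ) • k) ((r : ℂ) • k)) := by
  rw [rankOne_real_smul_self, map_smul, hfk, map_smul]

variable [PartialOrder T] [StarOrderedRing T]

lemma eq_of_apply_rankOne_eq_tmul_of_norm_eq_one (f : (H →L[ℂ] H) →ₗ[ℂ] T) (c : C)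
    (hf : ∀ p, IsStarProjection p → 0 ≤ f p ∧ f p ≤ τ.tmul c p)
    (hg : ‖g‖ = 1) (hh : ‖h‖ = 1) (hgh : ⟪g, h⟫_ℂ = 0) {cg ch : C}
    (hfg : f (rankOne ℂ g g) = τ.tmul cg (rankOne ℂ g g))
    (hfh : f (rankOne ℂ h h) = τ.tmul ch (rankOne ℂ h h)) : cg = ch := by
  have hh' : ‖-h‖ = 1 := by rwa [norm_neg]
  have hgh' : ⟪g, -h⟫_ℂ = 0 := by rw [inner_neg_right, hgh, neg_zero]
  set p := polarizationProj g h
  set m := polarizationProj g (-h)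
  have hp : IsStarProjection p := isStarProjection_polarizationProj hg hh hgh
  have hm : IsStarProjection m := isStarProjection_polarizationProj hg hh' hgh'
  have hpm : p * m = 0 := polarizationProj_mul_polarizationProj_neg hg hh hgh
  have hmp : m * p = 0 := by
    simpa only [neg_neg] using polarizationProj_mul_polarizationProj_neg hg hh' hgh'
  have hsum : f p + f m = τ.tmul cg (rankOne ℂ g g) + τ.tmul ch (rankOne ℂ h h) := by
    rw [← map_add, polarizationProj_add_polarizationProj_neg, map_add, hfg, hfh]
  have hfp : f p = τ.tmul ((2 : ℂ)⁻¹ • (cg + ch)) p := by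
    rw [← τ.conjugate_add_eq_of_nonneg_of_le_tmul hp hm hpm (hf p hp).1 (hf p hp).2
      (hf m hm).1 (hf m hm).2, hsum, τ.tmul_one_polarizationProj_conjugate hg hh hgh]
  have hfm : f m = τ.tmul ((2 : ℂ)⁻¹ • (cg + ch)) m := by
    rw [← τ.conjugate_add_eq_of_nonneg_of_le_tmul hm hp hmp (hf m hm).1 (hf m hm).2
      (hf p hp).1 (hf p hp).2, add_comm, hsum, ← rankOne_neg_self h,
      τ.tmul_one_polarizationProj_conjugate hg hh' hgh']
  refine τ.eq_of_tmul_add_tmul_eq_tmul_midpoint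
    (rankOne_self_ne_rankOne_self (by rintro rfl; simp at hg) hgh) ?_
  rw [← hsum, hfp, hfm, ← map_add, polarizationProj_add_polarizationProj_neg]

lemma eq_of_apply_rankOne_eq_tmul (f : (H →L[ℂ] H) →ₗ[ℂ] T) (c : C)
    (hf : ∀ p, IsStarProjection p → 0 ≤ f p ∧ f p ≤ τ.tmul c p)
    (hg : g ≠ 0) (hh : h ≠ 0) (hgh : ⟪g, h⟫_ℂ = 0) {cg ch : C}
    (hfg : f (rankOne ℂ g g) = τ.tmul cg (rankOne ℂ g g))
    (hfh : f (rankOne ℂ h h) = τ.tmul ch (rankOne ℂ h h)) : cg = ch := by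
  have norm_normalize {k : H} (hk : k ≠ 0) : ‖((‖k‖⁻¹ : ℝ) : ℂ) • k‖ = 1 := by
    simp [norm_smul, hk]
  exact τ.eq_of_apply_rankOne_eq_tmul_of_norm_eq_one f c hf (norm_normalize hg)
    (norm_normalize hh) (by simp [hgh]) (τ.apply_rankOne_real_smul_eq_tmul f _ hfg)
    (τ.apply_rankOne_real_smul_eq_tmul f _ hfh)

end CStarTensorProduct

theorem polarization_coefficients_eq_general {A C H TA TC : Type*}
    [CStarAlgebra A] [PartialOrder A] [StarOrderedRing A]
    [CStarAlgebra C]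
    [NormedAddCommGroup H] [InnerProductSpace ℂ H] [CompleteSpace H]
    [CStarAlgebra TA] [PartialOrder TA] [StarOrderedRing TA]
    [CStarAlgebra TC] [PartialOrder TC] [StarOrderedRing TC]
    (τA : CStarTensorProduct A (H →L[ℂ] H) TA)
    (τC : CStarTensorProduct C (H →L[ℂ] H) TC)
    (α : A →ₗ[ℂ] C) (αid : TA →ₗ[ℂ] TC)
    (hαid : ∀ (a : A) (S : H →L[ℂ] H), αid (τA.tmul a S) = τC.tmul (α a) S)
    (β : TA →ₗ[ℂ] TC)
    (hβpos : ∀ x : TA, 0 ≤ x → 0 ≤ β x)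
    (hdom : ∀ x : TA, 0 ≤ x → 0 ≤ αid x - β x)
    (g h : H) (hg : g ≠ 0) (hh : h ≠ 0) (hgh : ⟪g, h⟫_ℂ = 0)
    (a : A) (ha : 0 ≤ a) (cg ch : C)
    (hcg : β (τA.tmul a ((innerSL ℂ g).smulRight g)) = τC.tmul cg ((innerSL ℂ g).smulRight g))
    (hch : β (τA.tmul a ((innerSL ℂ h).smulRight h)) = τC.tmul ch ((innerSL ℂ h).smulRight h)) :
    cg = ch := by
  refine τC.eq_of_apply_rankOne_eq_tmul (β ∘ₗ τA.tmul a) (α a) (fun p hp ↦ ?_) hg hh hgh hcg hch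
  have hap : 0 ≤ τA.tmul a p := τA.tmul_nonneg ha hp.nonneg
  exact ⟨hβpos _ hap, by simpa [hαid] using hdom _ hap⟩

/-- polarization step: with `β` positive and dominated by `α ⊗ id`,
for orthogonal nonzero vectors `g ⊥ h` and positive `a ∈ A`, the coefficients
`cg, ch ∈ C` determined by `β(a ⊗ |g⟩⟨g|) = cg ⊗ |g⟩⟨g|` and
`β(a ⊗ |h⟩⟨h|) = ch ⊗ |h⟩⟨h|` coincide. -/
theorem polarization_coefficients_eq {A C H TA TC : Type*}
    [CStarAlgebra A] [PartialOrder A] [StarOrderedRing A]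
    [CStarAlgebra C] [PartialOrder C] [StarOrderedRing C]
    [NormedAddCommGroup H] [InnerProductSpace ℂ H] [CompleteSpace H]
    [CStarAlgebra TA] [PartialOrder TA] [StarOrderedRing TA]
    [CStarAlgebra TC] [PartialOrder TC] [StarOrderedRing TC]
    (τA : CStarTensorProduct A (H →L[ℂ] H) TA)
    (τC : CStarTensorProduct C (H →L[ℂ] H) TC)
    (α : A →ₗ[ℂ] C) (αid : TA →ₗ[ℂ] TC)
    (hαid : ∀ (a : A) (S : H →L[ℂ] H), αid (τA.tmul a S) = τC.tmul (α a) S)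
    (β : TA →ₗ[ℂ] TC)
    (hβpos : ∀ x : TA, 0 ≤ x → 0 ≤ β x)
    (hdom : ∀ x : TA, 0 ≤ x → 0 ≤ αid x - β x)
    (g h : H) (hg : g ≠ 0) (hh : h ≠ 0) (hgh : ⟪g, h⟫_ℂ = 0)
    (a : A) (ha : 0 ≤ a) (cg ch : C)
    (hcg : β (τA.tmul a ((innerSL ℂ g).smulRight g)) = τC.tmul cg ((innerSL ℂ g).smulRight g))
    (hch : β (τA.tmul a ((innerSL ℂ h).smulRight h)) = τC.tmul ch ((innerSL ℂ h).smulRight h)) :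
    cg = ch :=
  polarization_coefficients_eq_general τA τC α αid hαid β hβpos hdom g h hg hh hgh a ha cg ch hcg
    hch
end

section
/- Let A and C be unital C*-algebras and τ : A → C a non-zero positive linear map, and let φ : M_k(ℂ) → M_k(ℂ) be a positive map that is not completely copositive. Then τ ⊗ φ : A ⊗ M_k(ℂ) → C ⊗ M_k(ℂ) is not completely copositive. -/
/-!
Take a positive `M ∈ M_n(M_k(ℂ))` and a vector `x` with `c := x* (t_n ⊗ φ)(M) x ∉ [0, ∞)`.
Then `M ⊗ 1_A` is positive in `M_n(M_k(A))`, `(t_n ⊗ ψ)(M ⊗ 1_A) = (t_n ⊗ φ)(M) ⊗ τ(1)`, and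
compressing by `x ⊗ 1_C` gives `c • τ(1)`. A positive nonzero map has `τ(1) > 0`, so if `ψ` were
completely copositive then `c • τ(1) ≥ 0` would force `c ≥ 0`.
-/

open scoped ComplexOrder

/-- Positivity of a matrix over a C*-algebra: `0 ≤ Σ_{i,j} xᵢ* ⬝ Mᵢⱼ ⬝ xⱼ`
for every vector `x` with entries in the algebra. -/
def MatPos {A : Type*} [NonUnitalRing A] [StarRing A] [PartialOrder A]
    {n : Type*} [Fintype n] (M : Matrix n n A) : Prop :=
  ∀ x : n → A, 0 ≤ dotProduct (star x) (M.mulVec x)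

/-- The amplification `id_n ⊗ ψ` of a map `ψ : M_k(A) → M_k(C)`, acting blockwise on an
`n × n` block matrix with entries in `A` (indices flattened). -/
def amplPos {A C : Type*} [AddCommMonoid A] [Module ℂ A] [AddCommMonoid C] [Module ℂ C]
    {k : ℕ} (ψ : Matrix (Fin k) (Fin k) A →ₗ[ℂ] Matrix (Fin k) (Fin k) C) (n : ℕ)
    (M : Matrix (Fin n × Fin k) (Fin n × Fin k) A) :
    Matrix (Fin n × Fin k) (Fin n × Fin k) C :=
  Matrix.of fun p q => ψ (Matrix.of fun s t => M (p.1, s) (q.1, t)) p.2 q.2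

/-- The amplification `t_n ⊗ ψ` (transpose on the outer factor): block `(i,j)` of the
output is `ψ` applied to block `(j,i)` of the input. -/
def amplCopos {A C : Type*} [AddCommMonoid A] [Module ℂ A] [AddCommMonoid C] [Module ℂ C]
    {k : ℕ} (ψ : Matrix (Fin k) (Fin k) A →ₗ[ℂ] Matrix (Fin k) (Fin k) C) (n : ℕ)
    (M : Matrix (Fin n × Fin k) (Fin n × Fin k) A) :
    Matrix (Fin n × Fin k) (Fin n × Fin k) C :=
  Matrix.of fun p q => ψ (Matrix.of fun s t => M (q.1, s) (p.1, t)) p.2 q.2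

/-- A map `ψ : M_k(A) → M_k(C)` is completely positive if all amplifications `id_n ⊗ ψ`
preserve matrix positivity. -/
def IsCPBlock {A C : Type*} [NonUnitalRing A] [StarRing A] [PartialOrder A] [Module ℂ A]
    [NonUnitalRing C] [StarRing C] [PartialOrder C] [Module ℂ C] {k : ℕ}
    (ψ : Matrix (Fin k) (Fin k) A →ₗ[ℂ] Matrix (Fin k) (Fin k) C) : Prop :=
  ∀ (n : ℕ) (M : Matrix (Fin n × Fin k) (Fin n × Fin k) A),
    MatPos M → MatPos (amplPos ψ n M)

/-- A map `ψ : M_k(A) → M_k(C)` is completely copositive if all amplifications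
`t_n ⊗ ψ` preserve matrix positivity. -/
def IsCCPBlock {A C : Type*} [NonUnitalRing A] [StarRing A] [PartialOrder A] [Module ℂ A]
    [NonUnitalRing C] [StarRing C] [PartialOrder C] [Module ℂ C] {k : ℕ}
    (ψ : Matrix (Fin k) (Fin k) A →ₗ[ℂ] Matrix (Fin k) (Fin k) C) : Prop :=
  ∀ (n : ℕ) (M : Matrix (Fin n × Fin k) (Fin n × Fin k) A),
    MatPos M → MatPos (amplCopos ψ n M)

open Matrix

section MatPos

variable {R : Type*} [Ring R] [StarRing R] [PartialOrder R] [StarOrderedRing R]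
  {m n : Type*} [Fintype m] [Fintype n]

theorem matPos_conjTranspose_mul_self (B : Matrix m n R) : MatPos (Bᴴ * B) := by
  intro x
  rw [← mulVec_mulVec, dotProduct_mulVec, vecMul_conjTranspose, star_star]
  exact dotProduct_star_self_nonneg _

theorem MatPos.posSemidef [DecidableEq n] {M : Matrix n n ℂ} (h : MatPos M) : M.PosSemidef := by
  rw [← isPositive_toEuclideanLin_iff, LinearMap.isPositive_iff_complex]
  intro x
  have hx : 0 ≤ x.ofLp ⬝ᵥ star (M *ᵥ x.ofLp) := by
    rw [dotProduct_star, dotProduct_comm, star_nonneg_iff]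
    exact h x
  simp only [EuclideanSpace.inner_eq_star_dotProduct, toLpLin_apply]
  obtain ⟨hre, him⟩ := Complex.nonneg_iff.mp hx
  exact ⟨Complex.ext rfl (by simpa using him), hre⟩

theorem MatPos.map_smul_one [Algebra ℂ R] [StarModule ℂ R] {M : Matrix n n ℂ} (h : MatPos M) :
    MatPos (M.map (· • (1 : R))) := by
  classical
  obtain ⟨B, rfl⟩ : ∃ B : Matrix n n ℂ, M = star B * B := by
    open scoped MatrixOrder in
    exact CStarAlgebra.nonneg_iff_eq_star_mul_self.mp h.posSemidef.nonneg
  rw [← Algebra.algebraMap_eq_smul_one', star_eq_conjTranspose, Matrix.map_mul,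
    conjTranspose_map _ fun _ => algebraMap_star_comm _]
  exact matPos_conjTranspose_mul_self _

end MatPos

theorem star_smul_one_dotProduct_mulVec_map_smul {R : Type*} [Ring R] [StarRing R] [Algebra ℂ R]
    [StarModule ℂ R] {n : Type*} [Fintype n]
    (N : Matrix n n ℂ) (x : n → ℂ) (c : R) :
    star (fun p => x p • (1 : R)) ⬝ᵥ N.map (· • c) *ᵥ (fun p => x p • (1 : R)) =
      (star x ⬝ᵥ N *ᵥ x) • c := by
  simp [dotProduct, mulVec, Finset.sum_smul, Finset.sum_mul, Finset.smul_sum, smul_smul, mul_comm]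

section CStarAlgebra

variable {A C : Type*} [CStarAlgebra A] [PartialOrder A] [StarOrderedRing A]
  [CStarAlgebra C] [PartialOrder C] [StarOrderedRing C]

theorem Complex.nonneg_of_smul_nonneg_right {z : ℂ} {c : C} (hc : 0 < c) (h : 0 ≤ z • c) :
    0 ≤ z := by
  have hz : star z = z := by
    refine smul_left_injective ℂ hc.ne' ?_
    simpa [star_smul, hc.le.isSelfAdjoint.star_eq] using h.isSelfAdjoint.star_eq
  rw [← Complex.conj_eq_iff_re.mp hz, Complex.coe_smul] at h
  rw [← Complex.conj_eq_iff_re.mp hz, Complex.zero_le_real]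
  exact le_of_smul_le_smul_right (by simpa using h) hc

theorem LinearMap.map_one_ne_zero_of_nonneg {τ : A →ₗ[ℂ] C}
    (hτpos : ∀ a : A, 0 ≤ a → 0 ≤ τ a) (hτne : τ ≠ 0) : τ 1 ≠ 0 := by
  contrapose! hτne
  refine LinearMap.ext_on CStarAlgebra.span_nonneg fun a (ha : 0 ≤ a) => norm_le_zero_iff.mp ?_
  have : ‖τ a‖ ≤ ‖τ 1‖ * ‖a‖ := (PositiveLinearMap.mk₀ τ hτpos).norm_apply_le_of_nonneg a ha
  simpa [hτne] using this

end CStarAlgebra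

theorem amplCopos_map_smul {A C : Type*} [AddCommMonoid A] [Module ℂ A]
    [AddCommMonoid C] [Module ℂ C] {k : ℕ}
    {ψ : Matrix (Fin k) (Fin k) A →ₗ[ℂ] Matrix (Fin k) (Fin k) C}
    {φ : Matrix (Fin k) (Fin k) ℂ →ₗ[ℂ] Matrix (Fin k) (Fin k) ℂ} {a : A} {c : C}
    (hψ : ∀ m : Matrix (Fin k) (Fin k) ℂ,
      ψ (Matrix.of fun s t => m s t • a) = Matrix.of fun s t => φ m s t • c)
    (n : ℕ) (M : Matrix (Fin n × Fin k) (Fin n × Fin k) ℂ) :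
    amplCopos ψ n (M.map (· • a)) = (amplCopos φ n M).map (· • c) := by
  ext p q
  exact congrFun (congrFun (hψ (of fun s t => M (q.1, s) (p.1, t))) p.2) q.2

theorem tensor_not_completelyCopositive_general {A C : Type*}
    [CStarAlgebra A] [PartialOrder A] [StarOrderedRing A]
    [CStarAlgebra C] [PartialOrder C] [StarOrderedRing C]
    (τ : A →ₗ[ℂ] C) (hτpos : ∀ a : A, 0 ≤ a → 0 ≤ τ a) (hτne : τ ≠ 0)
    (k : ℕ) (φ : Matrix (Fin k) (Fin k) ℂ →ₗ[ℂ] Matrix (Fin k) (Fin k) ℂ)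
    (hφ : ¬ IsCCPBlock (φ : Matrix (Fin k) (Fin k) ℂ →ₗ[ℂ] Matrix (Fin k) (Fin k) ℂ))
    (ψ : Matrix (Fin k) (Fin k) A →ₗ[ℂ] Matrix (Fin k) (Fin k) C)
    (hψ : ∀ (a : A) (m : Matrix (Fin k) (Fin k) ℂ),
      ψ (Matrix.of fun s t => m s t • a) = Matrix.of fun s t => φ m s t • τ a) :
    ¬ IsCCPBlock ψ := by
  intro hψccp
  obtain ⟨n, M, hM, x, hx⟩ :
      ∃ n M, MatPos M ∧ ∃ x, ¬ 0 ≤ star x ⬝ᵥ amplCopos φ n M *ᵥ x := by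
    simpa [IsCCPBlock, MatPos] using hφ
  have hτ1 : 0 < τ 1 :=
    (hτpos 1 zero_le_one).lt_of_ne' (LinearMap.map_one_ne_zero_of_nonneg hτpos hτne)
  refine hx (Complex.nonneg_of_smul_nonneg_right hτ1 ?_)
  rw [← star_smul_one_dotProduct_mulVec_map_smul, ← amplCopos_map_smul (hψ 1)]
  exact hψccp n _ hM.map_smul_one _

/-- Remark 3.3: if `τ : A → C` is a nonzero positive linear map between
unital C*-algebras and `φ : M_k(ℂ) → M_k(ℂ)` is a positive map which is not completely
copositive, then `τ ⊗ φ : A ⊗ M_k(ℂ) → C ⊗ M_k(ℂ)` (the map determined by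
`a ⊗ m ↦ τ a ⊗ φ m`) is not completely copositive. -/
theorem tensor_not_completelyCopositive {A C : Type*}
    [CStarAlgebra A] [PartialOrder A] [StarOrderedRing A]
    [CStarAlgebra C] [PartialOrder C] [StarOrderedRing C]
    (τ : A →ₗ[ℂ] C) (hτpos : ∀ a : A, 0 ≤ a → 0 ≤ τ a) (hτne : τ ≠ 0)
    (k : ℕ) (φ : Matrix (Fin k) (Fin k) ℂ →ₗ[ℂ] Matrix (Fin k) (Fin k) ℂ)
    (hφpos : ∀ m : Matrix (Fin k) (Fin k) ℂ, MatPos m → MatPos (φ m))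
    (hφ : ¬ IsCCPBlock (φ : Matrix (Fin k) (Fin k) ℂ →ₗ[ℂ] Matrix (Fin k) (Fin k) ℂ))
    (ψ : Matrix (Fin k) (Fin k) A →ₗ[ℂ] Matrix (Fin k) (Fin k) C)
    (hψ : ∀ (a : A) (m : Matrix (Fin k) (Fin k) ℂ),
      ψ (Matrix.of fun s t => m s t • a) = Matrix.of fun s t => φ m s t • τ a) :
    ¬ IsCCPBlock ψ :=
  tensor_not_completelyCopositive_general τ hτpos hτne k φ hφ ψ hψ
end

section
/- Let A and C be unital C*-algebras and τ : A → C a linear map. If for some k ≥ 2 the map τ ⊗ id_k : A ⊗ M_k(ℂ) → C ⊗ M_k(ℂ) is decomposable (i.e., equals the sum of a completely positive map and a completely copositive map), then τ is completely positive. -/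
/-- A linear map `τ : A → C` between C*-algebras is completely positive if all matrix
amplifications `[aᵢⱼ] ↦ [τ aᵢⱼ]` preserve matrix positivity. -/
def IsCompletelyPositive {A C : Type*} [NonUnitalRing A] [StarRing A] [PartialOrder A]
    [Module ℂ A] [NonUnitalRing C] [StarRing C] [PartialOrder C] [Module ℂ C]
    (τ : A →ₗ[ℂ] C) : Prop :=
  ∀ (n : ℕ) (M : Matrix (Fin n) (Fin n) A), MatPos M → MatPos (M.map τ)


/-!
A decomposition `τ ⊗ id_k = α + β` makes `τ ⊗ id_k ⊗ id_N` positive on every PPT block matrix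
`P` (one that is positive together with its partial transpose `Pᵀ¹` in the outer index): `α`
handles `P`, and the copositive `β` handles `Pᵀ¹`, since `(t_N ⊗ β)(Pᵀ¹) = (id_N ⊗ β)(P)`.

For positive `M ∈ Mₙ(A)` let `S = tr(M) · 1` and `ω = Σₐ eₐ ⊗ eₐ ∈ ℂᵏ ⊗ ℂᵏ`. The matrix
`P = S ⊗ (k · 1 - ωω*) + M ⊗ ωω*` is PPT: `P ≥ 0` because `ωω* ≤ k · 1`, and
`Pᵀ¹ = S ⊗ (k · 1 - F) + Mᵀ ⊗ F`, with `F` the flip, is positive because `-S ≤ Mᵀ ≤ S` and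
`k ≥ 2`. Compressing `(τ ⊗ id)(P)` to `z ⊗ ω` gives `k² ⟨z, τ(M) z⟩ ≥ 0`.
-/

open Matrix

lemma nonneg_of_nsmul_nonneg {R : Type*} [AddCommMonoid R] [PartialOrder R] [Module ℝ R]
    [PosSMulReflectLE ℝ R] {m : ℕ} (hm : 0 < m) {a : R} (h : 0 ≤ m • a) : 0 ≤ a := by
  rw [← Nat.cast_smul_eq_nsmul ℝ] at h
  exact nonneg_of_smul_nonneg_of_pos_left h (by exact_mod_cast hm)

def partialTranspose {O κ R : Type*} (P : Matrix (O × κ) (O × κ) R) : Matrix (O × κ) (O × κ) R :=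
  of fun p q => P (q.1, p.2) (p.1, q.2)

section FlagTensor
variable {R : Type*} [NonUnitalRing R] {ι κ : Type*}

/-- `N ⊗ X` on `ι × κ × κ`. The first copy of `κ` is part of the outer (block) index, the second
one is the inner index `Fin k` on which maps `M_k(A) → M_k(C)` act. -/
def flagTensor (N : Matrix ι ι R) (X : Matrix (κ × κ) (κ × κ) ℤ) :
    Matrix ((ι × κ) × κ) ((ι × κ) × κ) R :=
  of fun p q => X (p.1.2, p.2) (q.1.2, q.2) • N p.1.1 q.1.1

def flagSlice (x : (ι × κ) × κ → R) (c : κ × κ) : ι → R := fun u => x ((u, c.1), c.2)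

def maxEntangledProj [DecidableEq κ] : Matrix (κ × κ) (κ × κ) ℤ :=
  of fun c d => if c.1 = c.2 ∧ d.1 = d.2 then 1 else 0

def maxEntangledVec [DecidableEq κ] (z : ι → R) : (ι × κ) × κ → R :=
  fun p => if p.1.2 = p.2 then z p.1.1 else 0

lemma partialTranspose_flagTensor (N : Matrix ι ι R) (X : Matrix (κ × κ) (κ × κ) ℤ) :
    partialTranspose (flagTensor N X) = flagTensor Nᵀ (partialTranspose X) := rfl

variable [StarRing R] [Fintype ι] [Fintype κ]

lemma dotProduct_flagTensor_mulVec (N : Matrix ι ι R) (X : Matrix (κ × κ) (κ × κ) ℤ)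
    (x y : (ι × κ) × κ → R) :
    star x ⬝ᵥ flagTensor N X *ᵥ y
      = ∑ c, ∑ d, X c d • (star (flagSlice x c) ⬝ᵥ N *ᵥ flagSlice y d) := by
  simp only [dotProduct, mulVec, flagTensor, of_apply, Pi.star_apply, flagSlice,
    Finset.mul_sum, Finset.smul_sum, smul_mul_assoc, mul_smul_comm, Fintype.sum_prod_type]
  rw [Finset.sum_comm]
  refine Finset.sum_congr rfl fun a _ => ?_
  rw [Finset.sum_comm]
  refine Finset.sum_congr rfl fun b _ => ?_
  conv_lhs => enter [2, u]; rw [Finset.sum_comm]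
  conv_lhs => enter [2, u, 2, a']; rw [Finset.sum_comm]
  rw [Finset.sum_comm]
  exact Finset.sum_congr rfl fun _ _ => Finset.sum_comm

variable [DecidableEq κ]

lemma dotProduct_flagTensor_one_mulVec (N : Matrix ι ι R) (x y : (ι × κ) × κ → R) :
    star x ⬝ᵥ flagTensor N 1 *ᵥ y = ∑ c, star (flagSlice x c) ⬝ᵥ N *ᵥ flagSlice y c := by
  simp [dotProduct_flagTensor_mulVec, one_apply, ite_smul]

lemma dotProduct_flagTensor_maxEntangledProj_mulVec (N : Matrix ι ι R)
    (x y : (ι × κ) × κ → R) :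
    star x ⬝ᵥ flagTensor N maxEntangledProj *ᵥ y
      = star (∑ a, flagSlice x (a, a)) ⬝ᵥ N *ᵥ ∑ a, flagSlice y (a, a) := by
  simp only [maxEntangledProj, ite_and, dotProduct_flagTensor_mulVec, of_apply, ite_smul,
    one_smul, zero_smul, Finset.sum_ite_irrel, Fintype.sum_prod_type, Finset.sum_ite_eq,
    Finset.mem_univ, ↓reduceIte, Finset.sum_const_zero, star_sum, mulVec_sum, dotProduct_sum,
    sum_dotProduct]
  exact Finset.sum_comm

lemma dotProduct_flagTensor_partialTranspose_maxEntangledProj_mulVec (N : Matrix ι ι R)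
    (x y : (ι × κ) × κ → R) :
    star x ⬝ᵥ flagTensor N (partialTranspose maxEntangledProj) *ᵥ y
      = ∑ a, ∑ b, star (flagSlice x (a, b)) ⬝ᵥ N *ᵥ flagSlice y (b, a) := by
  simp [dotProduct_flagTensor_mulVec, maxEntangledProj, partialTranspose, ite_smul, ite_and,
    Fintype.sum_prod_type]

lemma dotProduct_maxEntangledVec_flagTensor_mulVec (N : Matrix ι ι R)
    (X : Matrix (κ × κ) (κ × κ) ℤ) (z : ι → R) :
    star (maxEntangledVec (κ := κ) z) ⬝ᵥ flagTensor N X *ᵥ maxEntangledVec z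
      = (∑ a, ∑ b, X (a, a) (b, b)) • (star z ⬝ᵥ N *ᵥ z) := by
  have hslice : ∀ c : κ × κ, flagSlice (maxEntangledVec z) c = if c.1 = c.2 then z else 0 := by
    intro c
    ext u
    simp only [flagSlice, maxEntangledVec]
    split_ifs <;> rfl
  have hform : ∀ c d : κ × κ, star (flagSlice (maxEntangledVec z) c) ⬝ᵥ N *ᵥ
      flagSlice (maxEntangledVec z) d
        = if c.1 = c.2 ∧ d.1 = d.2 then star z ⬝ᵥ N *ᵥ z else 0 := by
    intro c d
    rw [hslice, hslice]
    by_cases hc : c.1 = c.2 <;> by_cases hd : d.1 = d.2 <;> simp [hc, hd]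
  simp [dotProduct_flagTensor_mulVec, hform, Fintype.sum_prod_type, ite_and, Finset.sum_smul]

end FlagTensor

section QuadraticForm
variable {R : Type*} [NonUnitalRing R] [StarRing R] [PartialOrder R] [StarOrderedRing R]
  {ι κ : Type*} [Fintype ι] [Fintype κ]

lemma MatPos.add {M N : Matrix ι ι R} (hM : MatPos M) (hN : MatPos N) : MatPos (M + N) :=
  fun x => by simpa only [Matrix.add_mulVec, dotProduct_add] using add_nonneg (hM x) (hN x)

variable [Module ℝ R] [PosSMulReflectLE ℝ R] {N : Matrix ι ι R}

lemma MatPos.dotProduct_sum_mulVec_sum_le (hN : MatPos N) (y : κ → ι → R) :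
    star (∑ a, y a) ⬝ᵥ N *ᵥ ∑ a, y a ≤ Fintype.card κ • ∑ a, star (y a) ⬝ᵥ N *ᵥ y a := by
  have hsum : star (∑ a, y a) ⬝ᵥ N *ᵥ ∑ a, y a = ∑ a, ∑ b, star (y a) ⬝ᵥ N *ᵥ y b := by
    simp only [star_sum, sum_dotProduct, mulVec_sum, dotProduct_sum]
    exact Finset.sum_comm
  have hdiff : ∑ a, ∑ b, star (y a - y b) ⬝ᵥ N *ᵥ (y a - y b)
      = 2 • (Fintype.card κ • ∑ a, star (y a) ⬝ᵥ N *ᵥ y a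
        - star (∑ a, y a) ⬝ᵥ N *ᵥ ∑ a, y a) := by
    simp only [star_sub, mulVec_sub, sub_dotProduct, dotProduct_sub, Finset.sum_sub_distrib,
      Finset.sum_const, Finset.card_univ, hsum, ← Finset.smul_sum]
    rw [Finset.sum_comm (f := fun a b => star (y b) ⬝ᵥ N *ᵥ y a)]
    abel
  rw [← sub_nonneg]
  exact nonneg_of_nsmul_nonneg two_pos
    (hdiff ▸ Finset.sum_nonneg fun a _ => Finset.sum_nonneg fun b _ => hN _)

lemma MatPos.sum_dotProduct_swap_le (hN : MatPos N) (y : κ → κ → ι → R) :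
    ∑ a, ∑ b, star (y a b) ⬝ᵥ N *ᵥ y b a ≤ ∑ a, ∑ b, star (y a b) ⬝ᵥ N *ᵥ y a b := by
  have hdiff : ∑ a, ∑ b, star (y a b - y b a) ⬝ᵥ N *ᵥ (y a b - y b a)
      = 2 • (∑ a, ∑ b, star (y a b) ⬝ᵥ N *ᵥ y a b - ∑ a, ∑ b, star (y a b) ⬝ᵥ N *ᵥ y b a) := by
    simp only [star_sub, mulVec_sub, sub_dotProduct, dotProduct_sub, Finset.sum_sub_distrib]
    rw [Finset.sum_comm (f := fun a b => star (y b a) ⬝ᵥ N *ᵥ y a b),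
      Finset.sum_comm (f := fun a b => star (y b a) ⬝ᵥ N *ᵥ y b a)]
    abel
  rw [← sub_nonneg]
  exact nonneg_of_nsmul_nonneg two_pos
    (hdiff ▸ Finset.sum_nonneg fun a _ => Finset.sum_nonneg fun b _ => hN _)

lemma MatPos.neg_sum_le_sum_dotProduct_swap (hN : MatPos N) (y : κ → κ → ι → R) :
    -∑ a, ∑ b, star (y a b) ⬝ᵥ N *ᵥ y a b ≤ ∑ a, ∑ b, star (y a b) ⬝ᵥ N *ᵥ y b a := by
  have hsum : ∑ a, ∑ b, star (y a b + y b a) ⬝ᵥ N *ᵥ (y a b + y b a)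
      = 2 • (∑ a, ∑ b, star (y a b) ⬝ᵥ N *ᵥ y a b + ∑ a, ∑ b, star (y a b) ⬝ᵥ N *ᵥ y b a) := by
    simp only [star_add, mulVec_add, add_dotProduct, dotProduct_add, Finset.sum_add_distrib]
    rw [Finset.sum_comm (f := fun a b => star (y b a) ⬝ᵥ N *ᵥ y a b),
      Finset.sum_comm (f := fun a b => star (y b a) ⬝ᵥ N *ᵥ y b a)]
    abel
  rw [neg_le_iff_add_nonneg']
  exact nonneg_of_nsmul_nonneg two_pos
    (hsum ▸ Finset.sum_nonneg fun a _ => Finset.sum_nonneg fun b _ => hN _)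

end QuadraticForm

section TraceDiagonal
variable {R : Type*} [NonUnitalRing R] [StarRing R] {ι : Type*} [Fintype ι] [DecidableEq ι]

def traceDiagonal (M : Matrix ι ι R) : Matrix ι ι R := diagonal fun _ => M.trace

lemma dotProduct_single_mulVec_single (N : Matrix ι ι R) (i j : ι) (p q : R) :
    star (Pi.single i p) ⬝ᵥ N *ᵥ Pi.single j q = star p * (N i j * q) := by
  simp [single_dotProduct]

lemma dotProduct_traceDiagonal_mulVec_eq_sum_single (M : Matrix ι ι R) (y : ι → R) :
    star y ⬝ᵥ traceDiagonal M *ᵥ y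
      = ∑ u, ∑ v, star (Pi.single v (y u)) ⬝ᵥ M *ᵥ Pi.single v (y u) := by
  simp only [dotProduct_single_mulVec_single]
  simp [traceDiagonal, dotProduct, mulVec_diagonal, trace, Finset.mul_sum, Finset.sum_mul]

lemma dotProduct_transpose_mulVec_eq_sum_single (M : Matrix ι ι R) (y : ι → R) :
    star y ⬝ᵥ Mᵀ *ᵥ y = ∑ u, ∑ v, star (Pi.single v (y u)) ⬝ᵥ M *ᵥ Pi.single u (y v) := by
  simp only [dotProduct_single_mulVec_single]
  simp [dotProduct, mulVec, Finset.mul_sum]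

variable [PartialOrder R] [StarOrderedRing R] {M : Matrix ι ι R}

lemma matPos_traceDiagonal (hM : MatPos M) : MatPos (traceDiagonal M) := fun y => by
  rw [dotProduct_traceDiagonal_mulVec_eq_sum_single]
  exact Finset.sum_nonneg fun u _ => Finset.sum_nonneg fun v _ => hM _

variable [Module ℝ R] [PosSMulReflectLE ℝ R]

lemma matPos_traceDiagonal_sub_transpose (hM : MatPos M) : MatPos (traceDiagonal M - Mᵀ) :=
  fun y => by
    rw [Matrix.sub_mulVec, dotProduct_sub, sub_nonneg,
      dotProduct_traceDiagonal_mulVec_eq_sum_single, dotProduct_transpose_mulVec_eq_sum_single]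
    exact hM.sum_dotProduct_swap_le fun u v => Pi.single v (y u)

lemma matPos_traceDiagonal_add_transpose (hM : MatPos M) : MatPos (traceDiagonal M + Mᵀ) :=
  fun y => by
    rw [Matrix.add_mulVec, dotProduct_add, ← neg_le_iff_add_nonneg',
      dotProduct_traceDiagonal_mulVec_eq_sum_single, dotProduct_transpose_mulVec_eq_sum_single]
    exact hM.neg_sum_le_sum_dotProduct_swap fun u v => Pi.single v (y u)

end TraceDiagonal

section Certificate
variable {R : Type*} [NonUnitalRing R] {ι κ : Type*} [Fintype ι] [DecidableEq ι]
  [Fintype κ] [DecidableEq κ]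

variable (κ) in
def pptCertificate (M : Matrix ι ι R) : Matrix ((ι × κ) × κ) ((ι × κ) × κ) R :=
  Fintype.card κ • flagTensor (traceDiagonal M) 1
    + flagTensor (M - traceDiagonal M) maxEntangledProj

lemma partialTranspose_pptCertificate (M : Matrix ι ι R) :
    partialTranspose (pptCertificate κ M)
      = Fintype.card κ • flagTensor (traceDiagonal M) 1
        + flagTensor (Mᵀ - traceDiagonal M) (partialTranspose maxEntangledProj) := by
  have hone : partialTranspose (1 : Matrix (κ × κ) (κ × κ) ℤ) = 1 := by
    ext ⟨a, b⟩ ⟨a', b'⟩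
    simp only [partialTranspose, of_apply, one_apply, Prod.mk.injEq]
    exact if_congr ⟨fun h => ⟨h.1.symm, h.2⟩, fun h => ⟨h.1.symm, h.2⟩⟩ rfl rfl
  change Fintype.card κ • partialTranspose (flagTensor (traceDiagonal M) 1)
    + partialTranspose (flagTensor (M - traceDiagonal M) maxEntangledProj) = _
  rw [partialTranspose_flagTensor, partialTranspose_flagTensor, hone, transpose_sub,
    traceDiagonal, diagonal_transpose]

lemma dotProduct_maxEntangledVec_map_pptCertificate_mulVec {R' F : Type*} [NonUnitalRing R']
    [StarRing R'] [FunLike F R R'] [AddMonoidHomClass F R R'] (f : F) (M : Matrix ι ι R)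
    (z : ι → R') :
    star (maxEntangledVec (κ := κ) z) ⬝ᵥ (pptCertificate κ M).map f *ᵥ maxEntangledVec z
      = (Fintype.card κ * Fintype.card κ) • (star z ⬝ᵥ M.map f *ᵥ z) := by
  have hmap : (pptCertificate κ M).map f
      = Fintype.card κ • flagTensor ((traceDiagonal M).map f) 1
        + flagTensor (M.map f - (traceDiagonal M).map f) maxEntangledProj := by
    ext p q
    simp [pptCertificate, flagTensor, map_zsmul, map_nsmul, map_sub]
  rw [hmap, Matrix.add_mulVec, smul_mulVec, dotProduct_add, dotProduct_smul,
    dotProduct_maxEntangledVec_flagTensor_mulVec, dotProduct_maxEntangledVec_flagTensor_mulVec]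
  simp only [one_apply, Prod.mk.injEq, and_self, Finset.sum_ite_eq, Finset.mem_univ, ↓reduceIte,
    Finset.sum_const, Finset.card_univ, Int.nsmul_eq_mul, mul_one, natCast_zsmul,
    maxEntangledProj, of_apply, Matrix.sub_mulVec, dotProduct_sub]
  rw [← Nat.cast_mul, natCast_zsmul, smul_smul, smul_sub]
  abel

variable [StarRing R] [PartialOrder R] [StarOrderedRing R] [Module ℝ R] [PosSMulReflectLE ℝ R]
  {M : Matrix ι ι R}

theorem matPos_pptCertificate (hM : MatPos M) : MatPos (pptCertificate κ M) := fun x => by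
  have hdiag : ∑ a, star (flagSlice x (a, a)) ⬝ᵥ traceDiagonal M *ᵥ flagSlice x (a, a)
      ≤ ∑ c, star (flagSlice x c) ⬝ᵥ traceDiagonal M *ᵥ flagSlice x c := by
    rw [Fintype.sum_prod_type]
    exact Finset.sum_le_sum fun a _ => Finset.single_le_sum
      (f := fun b => star (flagSlice x (a, b)) ⬝ᵥ traceDiagonal M *ᵥ flagSlice x (a, b))
      (fun b _ => matPos_traceDiagonal hM _) (Finset.mem_univ a)
  have hbound := ((matPos_traceDiagonal hM).dotProduct_sum_mulVec_sum_le
    fun a => flagSlice x (a, a)).trans (nsmul_le_nsmul_right hdiag _)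
  rw [pptCertificate, Matrix.add_mulVec, smul_mulVec, dotProduct_add, dotProduct_smul,
    dotProduct_flagTensor_one_mulVec, dotProduct_flagTensor_maxEntangledProj_mulVec,
    Matrix.sub_mulVec, dotProduct_sub, add_sub_left_comm]
  exact add_nonneg (hM _) (sub_nonneg.2 hbound)

theorem matPos_partialTranspose_pptCertificate (hM : MatPos M) (hκ : 2 ≤ Fintype.card κ) :
    MatPos (partialTranspose (pptCertificate κ M)) := fun x => by
  have hterm : ∀ y, 0 ≤ Fintype.card κ • (star y ⬝ᵥ traceDiagonal M *ᵥ y)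
      - star y ⬝ᵥ (traceDiagonal M - Mᵀ) *ᵥ y := by
    intro y
    obtain ⟨m, hm⟩ : ∃ m, Fintype.card κ = m + 2 := ⟨Fintype.card κ - 2, by omega⟩
    have h := add_nonneg (nsmul_nonneg (matPos_traceDiagonal hM y) m)
      (matPos_traceDiagonal_add_transpose hM y)
    rw [Matrix.add_mulVec, dotProduct_add] at h
    rw [hm, Matrix.sub_mulVec, dotProduct_sub, add_nsmul, two_nsmul]
    convert h using 1
    abel
  have hswap := (matPos_traceDiagonal_sub_transpose hM).sum_dotProduct_swap_le
    fun a b => flagSlice x (a, b)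
  rw [partialTranspose_pptCertificate, Matrix.add_mulVec, smul_mulVec, dotProduct_add,
    dotProduct_smul, dotProduct_flagTensor_one_mulVec,
    dotProduct_flagTensor_partialTranspose_maxEntangledProj_mulVec, ← neg_sub]
  simp only [neg_mulVec, dotProduct_neg, Finset.sum_neg_distrib, ← sub_eq_add_neg,
    Fintype.sum_prod_type]
  calc (0 : R)
      ≤ ∑ a, ∑ b, (Fintype.card κ • (star (flagSlice x (a, b)) ⬝ᵥ traceDiagonal M *ᵥ
          flagSlice x (a, b)) - star (flagSlice x (a, b)) ⬝ᵥ (traceDiagonal M - Mᵀ) *ᵥ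
          flagSlice x (a, b)) :=
        Finset.sum_nonneg fun a _ => Finset.sum_nonneg fun b _ => hterm _
    _ ≤ _ := by
        simp only [Finset.sum_sub_distrib, ← Finset.smul_sum]
        exact sub_le_sub_left hswap _

end Certificate

section Decomposable
variable {R : Type*} [NonUnitalRing R] [StarRing R] [PartialOrder R]

lemma MatPos.submatrix_equiv {ι ι' : Type*} [Fintype ι] [Fintype ι'] {M : Matrix ι ι R}
    (hM : MatPos M) (e : ι' ≃ ι) : MatPos (M.submatrix e e) := fun x => by
  rw [submatrix_mulVec_equiv, ← comp_equiv_symm_dotProduct]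
  exact hM (x ∘ e.symm)

lemma matPos_submatrix_equiv_iff {ι ι' : Type*} [Fintype ι] [Fintype ι'] {M : Matrix ι ι R}
    (e : ι' ≃ ι) : MatPos (M.submatrix e e) ↔ MatPos M :=
  ⟨fun h => by simpa using h.submatrix_equiv e.symm, fun h => h.submatrix_equiv e⟩

variable {A C : Type*} [NonUnitalRing A] [StarRing A] [PartialOrder A] [Module ℂ A]
  [NonUnitalRing C] [StarRing C] [PartialOrder C] [StarOrderedRing C] [Module ℂ C] {k : ℕ}

theorem MatPos.map_of_partialTranspose {τ : A →ₗ[ℂ] C}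
    {α β : Matrix (Fin k) (Fin k) A →ₗ[ℂ] Matrix (Fin k) (Fin k) C}
    (hα : IsCPBlock α) (hβ : IsCCPBlock β) (hτ : τ.mapMatrix = α + β)
    {O : Type*} [Fintype O] {P : Matrix (O × Fin k) (O × Fin k) A}
    (hP : MatPos P) (hPΓ : MatPos (partialTranspose P)) : MatPos (P.map τ) := by
  let e : Fin (Fintype.card O) × Fin k ≃ O × Fin k :=
    (Fintype.equivFin O).symm.prodCongr (Equiv.refl _)
  have hβP : amplCopos β _ ((partialTranspose P).submatrix e e)
      = amplPos β _ (P.submatrix e e) := rfl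
  have hτP : (P.map τ).submatrix e e = amplPos (α + β) _ (P.submatrix e e) := by
    rw [← hτ]
    rfl
  have hsum := (hα _ _ (hP.submatrix_equiv e)).add (hβ _ _ (hPΓ.submatrix_equiv e))
  rw [hβP] at hsum
  rw [← matPos_submatrix_equiv_iff e, hτP]
  exact hsum

end Decomposable

/-- Theorem 3.1, Piani–Mora generalized: let `τ : A → C` be a linear map
between unital C*-algebras.  If for some `k ≥ 2` the map `τ ⊗ id_k : M_k(A) → M_k(C)` is
decomposable, i.e. a sum of a completely positive and a completely copositive map, then
`τ` is completely positive. -/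
theorem completelyPositive_of_mapMatrix_decomposable {A C : Type*}
    [CStarAlgebra A] [PartialOrder A] [StarOrderedRing A]
    [CStarAlgebra C] [PartialOrder C] [StarOrderedRing C]
    (τ : A →ₗ[ℂ] C) (k : ℕ) (hk : 2 ≤ k)
    (hdec : ∃ α β : Matrix (Fin k) (Fin k) A →ₗ[ℂ] Matrix (Fin k) (Fin k) C,
      IsCPBlock α ∧ IsCCPBlock β ∧ τ.mapMatrix = α + β) :
    IsCompletelyPositive τ := by
  obtain ⟨α, β, hα, hβ, hτ⟩ := hdec
  intro n M hM z
  have hcard : 2 ≤ Fintype.card (Fin k) := by rwa [Fintype.card_fin]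
  have hP := MatPos.map_of_partialTranspose hα hβ hτ (matPos_pptCertificate (κ := Fin k) hM)
    (matPos_partialTranspose_pptCertificate hM hcard) (maxEntangledVec z)
  rw [dotProduct_maxEntangledVec_map_pptCertificate_mulVec, Fintype.card_fin] at hP
  exact nonneg_of_nsmul_nonneg (by positivity) hP
end

section
/- Let τ : A → C be a linear map between unital C*-algebras and k ≥ 2. If τ ⊗ id_k = α + β where α is completely positive and β is completely copositive, and if moreover α = α₁ ⊗ id_k and β = β₁ ⊗ id_k for positive linear maps α₁, β₁ : A → C, then β₁ = 0 and τ = α₁. -/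
open Matrix

section

variable {A C : Type*}

theorem matPos_of_ite_and [NonUnitalRing A] [StarRing A] [PartialOrder A] [StarOrderedRing A]
    {n : Type*} [Fintype n] (P : n → Prop) [DecidablePred P] {a : A} (ha : 0 ≤ a) :
    MatPos (of fun p q => if P p ∧ P q then a else 0) := by
  intro x
  have hform : star x ⬝ᵥ (of (fun p q => if P p ∧ P q then a else 0) *ᵥ x)
      = star (∑ p, if P p then x p else 0) * a * ∑ q, if P q then x q else 0 := by
    simp only [dotProduct, mulVec, ite_and, of_apply, Pi.star_apply, star_sum, Finset.sum_mul,
      Finset.mul_sum]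
    conv_rhs => rw [Finset.sum_comm]
    refine Finset.sum_congr rfl fun p _ => Finset.sum_congr rfl fun q _ => ?_
    split_ifs <;> simp [mul_assoc]
  rw [hform]
  exact star_left_conjugate_nonneg ha _

theorem amplCopos_mapMatrix_ite_and [AddCommMonoid A] [Module ℂ A] [AddCommMonoid C] [Module ℂ C]
    {k : ℕ} (ψ : A →ₗ[ℂ] C) (a : A) :
    amplCopos (ψ.mapMatrix : Matrix (Fin k) (Fin k) A →ₗ[ℂ] _) k
        (of fun p q => if p.1 = p.2 ∧ q.1 = q.2 then a else 0)
      = of fun p q => if p = q.swap then ψ a else 0 := by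
  ext p q
  simp only [amplCopos, LinearMap.mapMatrix_apply, map_apply, of_apply, apply_ite ψ, map_zero,
    Prod.ext_iff, Prod.fst_swap, Prod.snd_swap]
  simp only [eq_comm, and_comm]

theorem mulVec_ite_eq_swap [NonUnitalNonAssocSemiring C] {ι : Type*} [Fintype ι] [DecidableEq ι]
    (b : C) (x : ι × ι → C) (p : ι × ι) :
    ((of fun p q => if p = q.swap then b else 0) *ᵥ x) p = b * x p.swap := by
  simp only [mulVec, dotProduct, of_apply, ite_mul, zero_mul, ← Prod.swap_eq_iff_eq_swap,
    Finset.sum_ite_eq, Finset.mem_univ, if_true]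

theorem dotProduct_mulVec_ite_eq_swap_antisymm [Ring C] [StarRing C] {ι : Type*} [Fintype ι]
    [DecidableEq ι] {i j : ι} (hij : i ≠ j) (b : C) :
    star (Pi.single (i, j) 1 - Pi.single (j, i) 1) ⬝ᵥ
        ((of fun p q => if p = q.swap then b else 0) *ᵥ (Pi.single (i, j) 1 - Pi.single (j, i) 1))
      = -(b + b) := by
  have hne : (i, j) ≠ (j, i) := fun h => hij (congrArg Prod.fst h)
  simp only [dotProduct, mulVec_ite_eq_swap, Pi.star_apply]
  rw [Fintype.sum_eq_add (i, j) (j, i) hne]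
  · simp [hne, hne.symm]
  · rintro p ⟨hp₁, hp₂⟩
    simp [hp₁, hp₂]

namespace LinearMap

theorem map_eq_zero_of_isCCPBlock_mapMatrix
    [NonUnitalRing A] [StarRing A] [PartialOrder A] [StarOrderedRing A] [Module ℂ A]
    [Ring C] [StarRing C] [PartialOrder C] [StarOrderedRing C] [Module ℂ C]
    {k : ℕ} (hk : 2 ≤ k) {ψ : A →ₗ[ℂ] C} (hψ_pos : ∀ a, 0 ≤ a → 0 ≤ ψ a)
    (hψ : IsCCPBlock (ψ.mapMatrix : Matrix (Fin k) (Fin k) A →ₗ[ℂ] _)) {a : A} (ha : 0 ≤ a) :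
    ψ a = 0 := by
  let i : Fin k := ⟨0, by omega⟩
  let j : Fin k := ⟨1, by omega⟩
  have hswap := hψ k _ (matPos_of_ite_and (fun p : Fin k × Fin k => p.1 = p.2) ha)
    (Pi.single (i, j) 1 - Pi.single (j, i) 1)
  rw [amplCopos_mapMatrix_ite_and,
    dotProduct_mulVec_ite_eq_swap_antisymm (by simp [i, j, Fin.ext_iff])] at hswap
  have hψa := hψ_pos a ha
  refine le_antisymm ?_ hψa
  calc ψ a ≤ ψ a + ψ a := le_add_of_nonneg_left hψa
    _ ≤ 0 := neg_nonneg.mp hswap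

theorem eq_zero_of_isCCPBlock_mapMatrix
    [CStarAlgebra A] [PartialOrder A] [StarOrderedRing A]
    [Ring C] [StarRing C] [PartialOrder C] [StarOrderedRing C] [Module ℂ C]
    {k : ℕ} (hk : 2 ≤ k) {ψ : A →ₗ[ℂ] C} (hψ_pos : ∀ a, 0 ≤ a → 0 ≤ ψ a)
    (hψ : IsCCPBlock (ψ.mapMatrix : Matrix (Fin k) (Fin k) A →ₗ[ℂ] _)) :
    ψ = 0 :=
  ext_on CStarAlgebra.span_nonneg fun _ ha => map_eq_zero_of_isCCPBlock_mapMatrix hk hψ_pos hψ ha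

theorem mapMatrix_injective {R α β m n : Type*} [Semiring R] [AddCommMonoid α] [AddCommMonoid β]
    [Module R α] [Module R β] [Nonempty m] [Nonempty n] :
    Function.Injective (mapMatrix : (α →ₗ[R] β) → Matrix m n α →ₗ[R] Matrix m n β) := by
  intro f g hfg
  ext a
  simpa using congr($hfg (of fun _ _ => a) (Classical.arbitrary m) (Classical.arbitrary n))

end LinearMap

end

theorem decomposition_forces_copositive_part_zero_general {A C : Type*}
    [CStarAlgebra A] [PartialOrder A] [StarOrderedRing A]
    [CStarAlgebra C] [PartialOrder C] [StarOrderedRing C]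
    (τ α₁ β₁ : A →ₗ[ℂ] C) (k : ℕ) (hk : 2 ≤ k)
    (α β : Matrix (Fin k) (Fin k) A →ₗ[ℂ] Matrix (Fin k) (Fin k) C)
    (hβCCP : IsCCPBlock β)
    (hsum : (τ.mapMatrix : Matrix (Fin k) (Fin k) A →ₗ[ℂ] Matrix (Fin k) (Fin k) C) = α + β)
    (hα : α = α₁.mapMatrix) (hβ : β = β₁.mapMatrix)
    (hβ₁pos : ∀ a : A, 0 ≤ a → 0 ≤ β₁ a) :
    β₁ = 0 ∧ τ = α₁ := by
  subst hα hβ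
  have hβ₁ : β₁ = 0 := LinearMap.eq_zero_of_isCCPBlock_mapMatrix hk hβ₁pos hβCCP
  have : Nonempty (Fin k) := ⟨⟨0, by omega⟩⟩
  refine ⟨hβ₁, LinearMap.mapMatrix_injective (m := Fin k) (n := Fin k) ?_⟩
  simpa [hβ₁] using hsum

/-- final step in the proof of Theorem 3.1: if `τ ⊗ id_k = α + β` with
`α` completely positive and `β` completely copositive, and moreover `α = α₁ ⊗ id_k`,
`β = β₁ ⊗ id_k` for positive linear maps `α₁, β₁ : A → C`, then `β₁ = 0` and `τ = α₁`. -/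
theorem decomposition_forces_copositive_part_zero {A C : Type*}
    [CStarAlgebra A] [PartialOrder A] [StarOrderedRing A]
    [CStarAlgebra C] [PartialOrder C] [StarOrderedRing C]
    (τ α₁ β₁ : A →ₗ[ℂ] C) (k : ℕ) (hk : 2 ≤ k)
    (α β : Matrix (Fin k) (Fin k) A →ₗ[ℂ] Matrix (Fin k) (Fin k) C)
    (hαCP : IsCPBlock α) (hβCCP : IsCCPBlock β)
    (hsum : (τ.mapMatrix : Matrix (Fin k) (Fin k) A →ₗ[ℂ] Matrix (Fin k) (Fin k) C) = α + β)
    (hα : α = α₁.mapMatrix) (hβ : β = β₁.mapMatrix)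
    (hα₁pos : ∀ a : A, 0 ≤ a → 0 ≤ α₁ a) (hβ₁pos : ∀ a : A, 0 ≤ a → 0 ≤ β₁ a) :
    β₁ = 0 ∧ τ = α₁ :=
  decomposition_forces_copositive_part_zero_general τ α₁ β₁ k hk α β hβCCP hsum hα hβ hβ₁pos
end
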